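/- Let s ∈ [0,1/2] and define the qutrit density matrices ρ¹ = diag(1,0,0), ρ² = diag(0,s,1−s), and ρ̄ = ½ρ¹ + ½ρ². Then [S(N_s(ρ̄)) − S(N_s^c(ρ̄))] − ½[S(N_s(ρ¹)) − S(N_s^c(ρ¹))] − ½[S(N_s(ρ²)) − S(N_s^c(ρ²))] = 1. (This shows the channel private information satisfies P^{(1)}(N_s) ≥ 1.) -/

import Mathlib

open Matrix ComplexOrder

/-- Von Neumann entropy (base-2) of a matrix: −∑ λᵢ log₂ λᵢ over its eigenvalues
(0 if the matrix is not Hermitian). -/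
noncomputable def vnEntropy {n : ℕ} (ρ : Matrix (Fin n) (Fin n) ℂ) : ℝ :=
  if h : ρ.IsHermitian then -∑ i, (h.eigenvalues i) * Real.logb 2 (h.eigenvalues i) else 0

/-- Kraus operator K₀ = √s|0⟩⟨0| + |2⟩⟨1| of N_s. -/
noncomputable def Kr0 (s : ℝ) : Matrix (Fin 3) (Fin 3) ℂ :=
  !![(Real.sqrt s : ℂ), 0, 0; 0, 0, 0; 0, 1, 0]

/-- Kraus operator K₁ = √(1−s)|1⟩⟨0| + |2⟩⟨2| of N_s. -/
noncomputable def Kr1 (s : ℝ) : Matrix (Fin 3) (Fin 3) ℂ :=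
  !![0, 0, 0; (Real.sqrt (1 - s) : ℂ), 0, 0; 0, 0, 1]

/-- The channel N_s. -/
noncomputable def chanNs (s : ℝ) (X : Matrix (Fin 3) (Fin 3) ℂ) : Matrix (Fin 3) (Fin 3) ℂ :=
  Kr0 s * X * (Kr0 s)ᴴ + Kr1 s * X * (Kr1 s)ᴴ

/-- Kraus operator L₀ = √s|0⟩⟨0| of N_s^c. -/
noncomputable def Lr0 (s : ℝ) : Matrix (Fin 2) (Fin 3) ℂ :=
  !![(Real.sqrt s : ℂ), 0, 0; 0, 0, 0]

/-- Kraus operator L₁ = √(1−s)|1⟩⟨0| of N_s^c. -/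
noncomputable def Lr1 (s : ℝ) : Matrix (Fin 2) (Fin 3) ℂ :=
  !![0, 0, 0; (Real.sqrt (1 - s) : ℂ), 0, 0]

/-- Kraus operator L₂ = |0⟩⟨1| + |1⟩⟨2| of N_s^c. -/
noncomputable def Lr2 : Matrix (Fin 2) (Fin 3) ℂ :=
  !![0, 1, 0; 0, 0, 1]

/-- The complementary channel N_s^c. -/
noncomputable def chanNsc (s : ℝ) (X : Matrix (Fin 3) (Fin 3) ℂ) : Matrix (Fin 2) (Fin 2) ℂ :=
  Lr0 s * X * (Lr0 s)ᴴ + Lr1 s * X * (Lr1 s)ᴴ + Lr2 * X * Lr2ᴴ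

/-!
Every state involved is diagonal and both channels map diagonal states to diagonal states, so each
entropy is the Shannon entropy of the diagonal. Writing `h` for the binary entropy of `(s, 1 - s)`,
`N_s(ρ̄) = diag(s/2, (1-s)/2, 1/2)` has entropy `1 + h/2`, `N_s(ρ²) = diag(0, 0, 1)` has entropy `0`,
and the other four outputs have entropy `h`, which leaves `1 + h/2 - h + h/2 = 1`.
-/

open Polynomial in
theorem Matrix.IsHermitian.map_eigenvalues_diagonal {𝕜 n : Type*} [RCLike 𝕜] [Fintype n]
    [DecidableEq n] (v : n → ℝ) (hA : (diagonal fun i => (v i : 𝕜)).IsHermitian) :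
    Finset.univ.val.map hA.eigenvalues = Finset.univ.val.map v := by
  have hroots := hA.roots_charpoly_eq_eigenvalues
  rw [charpoly_diagonal,
    roots_prod _ _ (Finset.prod_ne_zero_iff.mpr fun i _ => X_sub_C_ne_zero _)] at hroots
  simpa [Multiset.bind_singleton, Multiset.map_map, Function.comp_def] using
    (congrArg (Multiset.map RCLike.re) hroots).symm

theorem Matrix.IsHermitian.sum_eigenvalues_diagonal {𝕜 n : Type*} [RCLike 𝕜] [Fintype n]
    [DecidableEq n] (v : n → ℝ) (hA : (diagonal fun i => (v i : 𝕜)).IsHermitian) (f : ℝ → ℝ) :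
    ∑ i, f (hA.eigenvalues i) = ∑ i, f (v i) := by
  have := congrArg (fun m => (m.map f).sum) (hA.map_eigenvalues_diagonal v)
  simpa only [Multiset.map_map, Function.comp_def, Finset.sum_map_val] using this

theorem vnEntropy_diagonal {n : ℕ} (v : Fin n → ℝ) :
    vnEntropy (diagonal fun i => (v i : ℂ)) = -∑ i, v i * Real.logb 2 (v i) := by
  have hA : (diagonal fun i => (v i : ℂ)).IsHermitian :=
    isHermitian_diagonal_of_self_adjoint _ (funext fun i => Complex.conj_ofReal _)
  rw [vnEntropy, dif_pos hA, hA.sum_eigenvalues_diagonal v (fun x => x * Real.logb 2 x)]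

theorem vnEntropy_diagonal_vec2 (x y : ℝ) :
    vnEntropy (diagonal ![(x : ℂ), y]) = -(x * Real.logb 2 x + y * Real.logb 2 y) := by
  have hv : ![(x : ℂ), y] = fun i => ((![x, y] i : ℝ) : ℂ) := by ext i; fin_cases i <;> rfl
  simp [hv, vnEntropy_diagonal, Fin.sum_univ_two]

theorem vnEntropy_diagonal_vec3 (x y z : ℝ) :
    vnEntropy (diagonal ![(x : ℂ), y, z]) =
      -(x * Real.logb 2 x + y * Real.logb 2 y + z * Real.logb 2 z) := by
  have hv : ![(x : ℂ), y, z] = fun i => ((![x, y, z] i : ℝ) : ℂ) := by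
    ext i; fin_cases i <;> rfl
  simp [hv, vnEntropy_diagonal, Fin.sum_univ_three]

theorem Complex.ofReal_sqrt_mul_self {x : ℝ} (hx : 0 ≤ x) : (√x : ℂ) * √x = x := by
  rw [← ofReal_mul, Real.mul_self_sqrt hx]

theorem chanNs_diagonal {s : ℝ} (hs0 : 0 ≤ s) (hs1 : s ≤ 1) (a b c : ℝ) :
    chanNs s (diagonal ![(a : ℂ), b, c]) =
      diagonal ![((s * a : ℝ) : ℂ), ((1 - s) * a : ℝ), (b + c : ℝ)] := by
  ext i j
  fin_cases i <;> fin_cases j <;>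
    simp [chanNs, Kr0, Kr1, vecMul, dotProduct, Fin.sum_univ_three, mul_apply, diagonal_apply,
      ← mul_assoc, mul_right_comm _ (a : ℂ), Complex.ofReal_sqrt_mul_self hs0,
      Complex.ofReal_sqrt_mul_self (sub_nonneg.2 hs1)]

theorem chanNsc_diagonal {s : ℝ} (hs0 : 0 ≤ s) (hs1 : s ≤ 1) (a b c : ℝ) :
    chanNsc s (diagonal ![(a : ℂ), b, c]) =
      diagonal ![((s * a + b : ℝ) : ℂ), ((1 - s) * a + c : ℝ)] := by
  ext i j
  fin_cases i <;> fin_cases j <;>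
    simp [chanNsc, Lr0, Lr1, Lr2, vecMul, dotProduct, Fin.sum_univ_three, mul_apply,
      diagonal_apply, ← mul_assoc, mul_right_comm _ (a : ℂ), Complex.ofReal_sqrt_mul_self hs0,
      Complex.ofReal_sqrt_mul_self (sub_nonneg.2 hs1)]

theorem half_mul_logb_half (x : ℝ) :
    x / 2 * Real.logb 2 (x / 2) = x / 2 * Real.logb 2 x - x / 2 := by
  rcases eq_or_ne x 0 with rfl | hx
  · simp
  · rw [Real.logb_div hx two_ne_zero, Real.logb_self_eq_one one_lt_two]
    ring

theorem stmt5 (s : ℝ) (hs : s ∈ Set.Icc (0 : ℝ) (1/2)) :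
    let ρ1 : Matrix (Fin 3) (Fin 3) ℂ := Matrix.diagonal ![1, 0, 0]
    let ρ2 : Matrix (Fin 3) (Fin 3) ℂ := Matrix.diagonal ![0, (s : ℂ), ((1 - s : ℝ) : ℂ)]
    let ρbar : Matrix (Fin 3) (Fin 3) ℂ := (1/2 : ℂ) • ρ1 + (1/2 : ℂ) • ρ2
    (vnEntropy (chanNs s ρbar) - vnEntropy (chanNsc s ρbar)) -
      (1/2) * (vnEntropy (chanNs s ρ1) - vnEntropy (chanNsc s ρ1)) -
      (1/2) * (vnEntropy (chanNs s ρ2) - vnEntropy (chanNsc s ρ2)) = 1 := by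
  intro ρ1 ρ2 ρbar
  obtain ⟨hs0, hs1⟩ : 0 ≤ s ∧ s ≤ 1 := ⟨hs.1, hs.2.trans (by norm_num)⟩
  have hρ1 : ρ1 = diagonal ![((1 : ℝ) : ℂ), ((0 : ℝ) : ℂ), ((0 : ℝ) : ℂ)] := by simp [ρ1]
  have hρ2 : ρ2 = diagonal ![((0 : ℝ) : ℂ), (s : ℂ), ((1 - s : ℝ) : ℂ)] := by simp [ρ2]
  have hρbar :
      ρbar = diagonal ![((1 / 2 : ℝ) : ℂ), ((s / 2 : ℝ) : ℂ), (((1 - s) / 2 : ℝ) : ℂ)] := by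
    ext i j
    fin_cases i <;> fin_cases j <;> simp [ρbar, ρ1, ρ2] <;> ring
  rw [hρ1, hρ2, hρbar]
  simp only [chanNs_diagonal hs0 hs1, chanNsc_diagonal hs0 hs1, vnEntropy_diagonal_vec3,
    vnEntropy_diagonal_vec2]
  rw [show s * (1 / 2) = s / 2 by ring, show (1 - s) * (1 / 2) = (1 - s) / 2 by ring,
    show s / 2 + s / 2 = s by ring, show (1 - s) / 2 + (1 - s) / 2 = 1 - s by ring,
    show s / 2 + (1 - s) / 2 = 1 / 2 by ring, half_mul_logb_half, half_mul_logb_half]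
  norm_num
  rw [one_div, Real.logb_inv, Real.logb_self_eq_one one_lt_two]
  ring
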